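/- Let E₀ ∈ ℝ and c, c', J ∈ ℝ³. Set L² = ‖c‖² + ‖c'‖² + ‖J‖², W = ⟨c, c' × J⟩ (the scalar triple product), and A⁴ = ‖c × c'‖² + ‖c × J‖² + ‖c' × J‖². Suppose Q is a 4×4 positive semidefinite Hermitian complex matrix whose trace equals 4E₀, whose sum of 2×2 principal minors equals 6E₀² - 2L², whose sum of 3×3 principal minors equals 4E₀(E₀² - L²) + 8W, and whose determinant equals (E₀² - L²)² + 8E₀W - 4A⁴. Then E₀ ≥ √( L² - 2|W|^{2/3} + 2·√(max{A⁴ - L²·|W|^{2/3}, 0}) ). -/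

import Mathlib

open scoped RealInnerProductSpace ComplexOrder

noncomputable section

/-- The cross product on Euclidean `ℝ³`. -/
def cross3 (u v : EuclideanSpace ℝ (Fin 3)) : EuclideanSpace ℝ (Fin 3) :=
  (EuclideanSpace.equiv (Fin 3) ℝ).symm
    ![u 1 * v 2 - u 2 * v 1, u 2 * v 0 - u 0 * v 2, u 0 * v 1 - u 1 * v 0]

/-- The sum of the `k × k` principal minors of a `4 × 4` complex matrix. -/
def principalMinorSum (Q : Matrix (Fin 4) (Fin 4) ℂ) (k : ℕ) : ℂ :=
  ∑ s ∈ Finset.univ.powersetCard k,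
    Matrix.det (Q.submatrix (fun i : {x : Fin 4 // x ∈ s} => (i : Fin 4))
      (fun i : {x : Fin 4 // x ∈ s} => (i : Fin 4)))

/-- `L² = ‖c‖² + ‖c'‖² + ‖J‖²`. -/
def Lsq (c c' J : EuclideanSpace ℝ (Fin 3)) : ℝ := ‖c‖ ^ 2 + ‖c'‖ ^ 2 + ‖J‖ ^ 2

/-- `A⁴ = ‖c × c'‖² + ‖c × J‖² + ‖c' × J‖²`. -/
def Afour (c c' J : EuclideanSpace ℝ (Fin 3)) : ℝ :=
  ‖cross3 c c'‖ ^ 2 + ‖cross3 c J‖ ^ 2 + ‖cross3 c' J‖ ^ 2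

/-- The scalar triple product `W = ⟨c, c' × J⟩`. -/
def tripleProd (c c' J : EuclideanSpace ℝ (Fin 3)) : ℝ := ⟪c, cross3 c' J⟫


open Matrix

private lemma eta_fin_four (A : Matrix (Fin 4) (Fin 4) ℂ) :
    A = !![A 0 0, A 0 1, A 0 2, A 0 3;
           A 1 0, A 1 1, A 1 2, A 1 3;
           A 2 0, A 2 1, A 2 2, A 2 3;
           A 3 0, A 3 1, A 3 2, A 3 3] := by
  ext i j
  fin_cases i <;> fin_cases j <;> rfl

private lemma det_fin_four' (A : Matrix (Fin 4) (Fin 4) ℂ) :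
    A.det =
      A 0 0 * A 1 1 * A 2 2 * A 3 3 - A 0 0 * A 1 1 * A 2 3 * A 3 2
      - A 0 0 * A 1 2 * A 2 1 * A 3 3 + A 0 0 * A 1 2 * A 2 3 * A 3 1
      + A 0 0 * A 1 3 * A 2 1 * A 3 2 - A 0 0 * A 1 3 * A 2 2 * A 3 1
      - A 0 1 * A 1 0 * A 2 2 * A 3 3 + A 0 1 * A 1 0 * A 2 3 * A 3 2
      + A 0 1 * A 1 2 * A 2 0 * A 3 3 - A 0 1 * A 1 2 * A 2 3 * A 3 0
      - A 0 1 * A 1 3 * A 2 0 * A 3 2 + A 0 1 * A 1 3 * A 2 2 * A 3 0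
      + A 0 2 * A 1 0 * A 2 1 * A 3 3 - A 0 2 * A 1 0 * A 2 3 * A 3 1
      - A 0 2 * A 1 1 * A 2 0 * A 3 3 + A 0 2 * A 1 1 * A 2 3 * A 3 0
      + A 0 2 * A 1 3 * A 2 0 * A 3 1 - A 0 2 * A 1 3 * A 2 1 * A 3 0
      - A 0 3 * A 1 0 * A 2 1 * A 3 2 + A 0 3 * A 1 0 * A 2 2 * A 3 1
      + A 0 3 * A 1 1 * A 2 0 * A 3 2 - A 0 3 * A 1 1 * A 2 2 * A 3 0
      - A 0 3 * A 1 2 * A 2 0 * A 3 1 + A 0 3 * A 1 2 * A 2 1 * A 3 0 := by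
  rw [eta_fin_four A]
  simp only [det_succ_row_zero, ← Nat.not_even_iff_odd, submatrix_apply, Fin.succ_zero_eq_one,
    submatrix_submatrix, det_unique, Fin.default_eq_zero, Function.comp_apply,
    Fin.succ_one_eq_two, Fin.sum_univ_succ, Fin.val_zero, Fin.zero_succAbove, Finset.univ_unique,
    Fin.val_succ, Fin.val_eq_zero, Fin.succ_succAbove_zero, Finset.sum_singleton,
    Fin.succ_succAbove_one, Even.add_self, Matrix.cons_val_zero, Matrix.cons_val_one,
    Matrix.head_cons, Matrix.head_fin_const]
  simp [Fin.succAbove, Fin.lt_def, show Fin.castSucc (2 : Fin 3) = (2 : Fin 4) from rfl]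
  ring

private lemma detsub2 (Q : Matrix (Fin 4) (Fin 4) ℂ) (a b : Fin 4) (hab : a ≠ b) :
    Matrix.det (Q.submatrix (fun i : {x : Fin 4 // x ∈ ({a, b} : Finset (Fin 4))} => (i : Fin 4))
      (fun i : {x : Fin 4 // x ∈ ({a, b} : Finset (Fin 4))} => (i : Fin 4)))
    = Q a a * Q b b - Q a b * Q b a := by
  classical
  have ha : a ∈ ({a, b} : Finset (Fin 4)) := by simp
  have hb : b ∈ ({a, b} : Finset (Fin 4)) := by simp
  have hf : Function.Bijective (![⟨a, ha⟩, ⟨b, hb⟩] :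
      Fin 2 → {x : Fin 4 // x ∈ ({a, b} : Finset (Fin 4))}) := by
    constructor
    · intro i j hij
      fin_cases i <;> fin_cases j <;> simp_all
    · rintro ⟨x, hx⟩
      simp at hx
      rcases hx with h | h
      · exact ⟨0, by simp [h]⟩
      · exact ⟨1, by simp [h]⟩
  rw [← Matrix.det_submatrix_equiv_self (Equiv.ofBijective _ hf), Matrix.submatrix_submatrix,
    Matrix.det_fin_two]
  simp [Equiv.ofBijective_apply]

private lemma detsub3 (Q : Matrix (Fin 4) (Fin 4) ℂ) (a b c : Fin 4)
    (hab : a ≠ b) (hac : a ≠ c) (hbc : b ≠ c) :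
    Matrix.det (Q.submatrix
      (fun i : {x : Fin 4 // x ∈ ({a, b, c} : Finset (Fin 4))} => (i : Fin 4))
      (fun i : {x : Fin 4 // x ∈ ({a, b, c} : Finset (Fin 4))} => (i : Fin 4)))
    = Q a a * Q b b * Q c c - Q a a * Q b c * Q c b
      - Q a b * Q b a * Q c c + Q a b * Q b c * Q c a
      + Q a c * Q b a * Q c b - Q a c * Q b b * Q c a := by
  classical
  have ha : a ∈ ({a, b, c} : Finset (Fin 4)) := by simp
  have hb : b ∈ ({a, b, c} : Finset (Fin 4)) := by simp
  have hc : c ∈ ({a, b, c} : Finset (Fin 4)) := by simp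
  have hf : Function.Bijective (![⟨a, ha⟩, ⟨b, hb⟩, ⟨c, hc⟩] :
      Fin 3 → {x : Fin 4 // x ∈ ({a, b, c} : Finset (Fin 4))}) := by
    constructor
    · intro i j hij
      fin_cases i <;> fin_cases j <;> simp_all
    · rintro ⟨x, hx⟩
      simp at hx
      rcases hx with h | h | h
      · exact ⟨0, by simp [h]⟩
      · exact ⟨1, by simp [h]⟩
      · exact ⟨2, by simp [h]⟩
  rw [← Matrix.det_submatrix_equiv_self (Equiv.ofBijective _ hf), Matrix.submatrix_submatrix,
    Matrix.det_fin_three]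
  simp [Equiv.ofBijective_apply]

private lemma pms2_val (Q : Matrix (Fin 4) (Fin 4) ℂ) : principalMinorSum Q 2 =
    (Q 0 0 * Q 1 1 - Q 0 1 * Q 1 0) + (Q 0 0 * Q 2 2 - Q 0 2 * Q 2 0)
    + (Q 0 0 * Q 3 3 - Q 0 3 * Q 3 0) + (Q 1 1 * Q 2 2 - Q 1 2 * Q 2 1)
    + (Q 1 1 * Q 3 3 - Q 1 3 * Q 3 1) + (Q 2 2 * Q 3 3 - Q 2 3 * Q 3 2) := by
  rw [principalMinorSum, show (Finset.univ.powersetCard 2 : Finset (Finset (Fin 4))) =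
    {{0,1},{0,2},{0,3},{1,2},{1,3},{2,3}} from by decide]
  rw [Finset.sum_insert (by decide), Finset.sum_insert (by decide),
    Finset.sum_insert (by decide), Finset.sum_insert (by decide),
    Finset.sum_insert (by decide), Finset.sum_singleton,
    detsub2 Q 0 1 (by decide), detsub2 Q 0 2 (by decide), detsub2 Q 0 3 (by decide),
    detsub2 Q 1 2 (by decide), detsub2 Q 1 3 (by decide), detsub2 Q 2 3 (by decide)]
  ring

private lemma pms3_val (Q : Matrix (Fin 4) (Fin 4) ℂ) : principalMinorSum Q 3 =
    (Q 0 0 * Q 1 1 * Q 2 2 - Q 0 0 * Q 1 2 * Q 2 1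
      - Q 0 1 * Q 1 0 * Q 2 2 + Q 0 1 * Q 1 2 * Q 2 0
      + Q 0 2 * Q 1 0 * Q 2 1 - Q 0 2 * Q 1 1 * Q 2 0)
    + (Q 0 0 * Q 1 1 * Q 3 3 - Q 0 0 * Q 1 3 * Q 3 1
      - Q 0 1 * Q 1 0 * Q 3 3 + Q 0 1 * Q 1 3 * Q 3 0
      + Q 0 3 * Q 1 0 * Q 3 1 - Q 0 3 * Q 1 1 * Q 3 0)
    + (Q 0 0 * Q 2 2 * Q 3 3 - Q 0 0 * Q 2 3 * Q 3 2
      - Q 0 2 * Q 2 0 * Q 3 3 + Q 0 2 * Q 2 3 * Q 3 0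
      + Q 0 3 * Q 2 0 * Q 3 2 - Q 0 3 * Q 2 2 * Q 3 0)
    + (Q 1 1 * Q 2 2 * Q 3 3 - Q 1 1 * Q 2 3 * Q 3 2
      - Q 1 2 * Q 2 1 * Q 3 3 + Q 1 2 * Q 2 3 * Q 3 1
      + Q 1 3 * Q 2 1 * Q 3 2 - Q 1 3 * Q 2 2 * Q 3 1) := by
  rw [principalMinorSum, show (Finset.univ.powersetCard 3 : Finset (Finset (Fin 4))) =
    {{0,1,2},{0,1,3},{0,2,3},{1,2,3}} from by decide]
  rw [Finset.sum_insert (by decide), Finset.sum_insert (by decide),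
    Finset.sum_insert (by decide), Finset.sum_singleton,
    detsub3 Q 0 1 2 (by decide) (by decide) (by decide),
    detsub3 Q 0 1 3 (by decide) (by decide) (by decide),
    detsub3 Q 0 2 3 (by decide) (by decide) (by decide),
    detsub3 Q 1 2 3 (by decide) (by decide) (by decide)]
  ring

set_option maxHeartbeats 1600000 in
private lemma det_add_smul_one (Q : Matrix (Fin 4) (Fin 4) ℂ) (z : ℂ) :
    Matrix.det (Q + z • (1 : Matrix (Fin 4) (Fin 4) ℂ)) =
      z^4 + Q.trace * z^3 + principalMinorSum Q 2 * z^2 + principalMinorSum Q 3 * z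
        + Q.det := by
  have e : Q + z • (1 : Matrix (Fin 4) (Fin 4) ℂ) =
      !![Q 0 0 + z, Q 0 1, Q 0 2, Q 0 3;
         Q 1 0, Q 1 1 + z, Q 1 2, Q 1 3;
         Q 2 0, Q 2 1, Q 2 2 + z, Q 2 3;
         Q 3 0, Q 3 1, Q 3 2, Q 3 3 + z] := by
    ext i j
    fin_cases i <;> fin_cases j <;> simp [Matrix.one_apply]
  rw [e, det_fin_four' _, det_fin_four' Q, pms2_val, pms3_val, Matrix.trace, Fin.sum_univ_four]
  simp [Matrix.cons_val_two, Matrix.cons_val_three]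
  ring

private lemma det_add_posdef (Q : Matrix (Fin 4) (Fin 4) ℂ) (hPSD : Q.PosSemidef)
    (r : ℝ) (hr : 0 < r) :
    0 < Matrix.det (Q + (r : ℂ) • (1 : Matrix (Fin 4) (Fin 4) ℂ)) := by
  have h1 : ((r : ℂ) • (1 : Matrix (Fin 4) (Fin 4) ℂ)).PosDef := by
    rw [Matrix.smul_one_eq_diagonal]
    exact Matrix.PosDef.diagonal fun i => by positivity
  exact (Matrix.PosDef.posSemidef_add hPSD h1).det_pos

private lemma trace_eq_sum_ev {n : Type*} [Fintype n] [DecidableEq n] {A : Matrix n n ℝ}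
    (hA : A.IsHermitian) : A.trace = ∑ i, hA.eigenvalues i := by
  conv_lhs => rw [hA.spectral_theorem, Unitary.conjStarAlgAut_apply]
  rw [Matrix.trace_mul_cycle,
    (Matrix.mem_unitaryGroup_iff').mp (hA.eigenvectorUnitary).2, Matrix.one_mul,
    Matrix.trace_diagonal]
  simp

private lemma trace_sq_eq_sum_ev {n : Type*} [Fintype n] [DecidableEq n] {A : Matrix n n ℝ}
    (hA : A.IsHermitian) : (A * A).trace = ∑ i, (hA.eigenvalues i)^2 := by
  have h1 : (star (hA.eigenvectorUnitary : Matrix n n ℝ)) * (hA.eigenvectorUnitary : Matrix n n ℝ) = 1 :=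
    (Matrix.mem_unitaryGroup_iff').mp (hA.eigenvectorUnitary).2
  have key : A * A = (hA.eigenvectorUnitary : Matrix n n ℝ) *
      (Matrix.diagonal (RCLike.ofReal ∘ hA.eigenvalues) * Matrix.diagonal (RCLike.ofReal ∘ hA.eigenvalues)) *
      (star (hA.eigenvectorUnitary : Matrix n n ℝ)) := by
    conv_lhs => rw [hA.spectral_theorem, Unitary.conjStarAlgAut_apply]
    simp only [Matrix.mul_assoc]
    rw [show (star (hA.eigenvectorUnitary : Matrix n n ℝ)) *
        ((hA.eigenvectorUnitary : Matrix n n ℝ) *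
          (Matrix.diagonal (RCLike.ofReal ∘ hA.eigenvalues) * (star (hA.eigenvectorUnitary : Matrix n n ℝ)))) =
        Matrix.diagonal (RCLike.ofReal ∘ hA.eigenvalues) * (star (hA.eigenvectorUnitary : Matrix n n ℝ)) from by
      rw [← Matrix.mul_assoc, h1, Matrix.one_mul]]
  rw [key, Matrix.trace_mul_cycle, h1, Matrix.one_mul,
    Matrix.diagonal_mul_diagonal, Matrix.trace_diagonal]
  simp [pow_two]
private lemma ip3 (x y : EuclideanSpace ℝ (Fin 3)) : ⟪x, y⟫ = x 0 * y 0 + x 1 * y 1 + x 2 * y 2 := by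
  simp [PiLp.inner_apply, Fin.sum_univ_three]
  ring

private lemma nsq3 (x : EuclideanSpace ℝ (Fin 3)) : ‖x‖ ^ 2 = x 0 ^ 2 + x 1 ^ 2 + x 2 ^ 2 := by
  rw [← real_inner_self_eq_norm_sq, ip3]; ring

private lemma cross3_apply0 (u v : EuclideanSpace ℝ (Fin 3)) :
    cross3 u v 0 = u 1 * v 2 - u 2 * v 1 := rfl
private lemma cross3_apply1 (u v : EuclideanSpace ℝ (Fin 3)) :
    cross3 u v 1 = u 2 * v 0 - u 0 * v 2 := rfl
private lemma cross3_apply2 (u v : EuclideanSpace ℝ (Fin 3)) :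
    cross3 u v 2 = u 0 * v 1 - u 1 * v 0 := rfl

section Gram
variable (c c' J : EuclideanSpace ℝ (Fin 3))

def gram (c c' J : EuclideanSpace ℝ (Fin 3)) : Matrix (Fin 3) (Fin 3) ℝ :=
  !![⟪c,c⟫, ⟪c,c'⟫, ⟪c,J⟫; ⟪c',c⟫, ⟪c',c'⟫, ⟪c',J⟫; ⟪J,c⟫, ⟪J,c'⟫, ⟪J,J⟫]

private lemma gram_psd : (gram c c' J).PosSemidef := by
  rw [Matrix.posSemidef_iff_dotProduct_mulVec]
  constructor
  · ext i j
    fin_cases i <;> fin_cases j <;>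
      simp [_root_.gram, Matrix.conjTranspose_apply, mul_comm, real_inner_comm]
  · intro x
    simp only [dotProduct, Matrix.mulVec, Fin.sum_univ_three, _root_.gram,
      Matrix.cons_val_zero, Matrix.cons_val_one, Matrix.head_cons, Matrix.cons_val_two,
      Matrix.cons_val_succ, Fin.succ_zero_eq_one, Matrix.head_fin_const, Matrix.of_apply, Matrix.cons_val', Matrix.empty_val',
      Matrix.cons_val_fin_one, Pi.star_apply, star_trivial, Matrix.vecTail, Matrix.vecHead,
      Function.comp_apply, ip3]
    nlinarith [sq_nonneg (x 0 * c 0 + x 1 * c' 0 + x 2 * J 0),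
      sq_nonneg (x 0 * c 1 + x 1 * c' 1 + x 2 * J 1),
      sq_nonneg (x 0 * c 2 + x 1 * c' 2 + x 2 * J 2), sq_nonneg (x 0)]

private lemma gram_trace : (gram c c' J).trace = Lsq c c' J := by
  rw [Matrix.trace_fin_three, Lsq, ← real_inner_self_eq_norm_sq, ← real_inner_self_eq_norm_sq,
    ← real_inner_self_eq_norm_sq]
  simp [_root_.gram]

private lemma gram_trace_sq : (gram c c' J * gram c c' J).trace = (Lsq c c' J)^2 - 2 * Afour c c' J := by
  rw [Matrix.trace_fin_three]
  simp only [_root_.gram, Matrix.mul_apply, Fin.sum_univ_three, Matrix.cons_val_zero,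
    Matrix.cons_val_one, Matrix.head_cons, Matrix.cons_val_two, Matrix.cons_val_succ,
    Fin.succ_zero_eq_one, Matrix.head_fin_const,
    Matrix.of_apply, Matrix.cons_val', Matrix.empty_val', Matrix.cons_val_fin_one,
    Matrix.vecTail, Matrix.vecHead, Function.comp_apply]
  simp only [Lsq, Afour, nsq3, ip3, cross3_apply0, cross3_apply1, cross3_apply2]
  ring

private lemma gram_det : (gram c c' J).det = (tripleProd c c' J)^2 := by
  rw [Matrix.det_fin_three]
  simp only [_root_.gram, Matrix.cons_val_zero, Matrix.cons_val_one, Matrix.head_cons,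
    Matrix.cons_val_two, Matrix.cons_val_succ, Fin.succ_zero_eq_one, Matrix.head_fin_const, Matrix.of_apply, Matrix.cons_val',
    Matrix.empty_val', Matrix.cons_val_fin_one, Matrix.vecTail, Matrix.vecHead,
    Function.comp_apply]
  simp only [tripleProd, ip3, cross3_apply0, cross3_apply1, cross3_apply2]
  ring

end Gram
private lemma core_alg (E ℓ α W g1 g2 z V : ℝ)
    (hg10 : 0 ≤ g1) (hg20 : 0 ≤ g2) (hg21 : g2 ≤ g1) (hzle : |z| ≤ g2)
    (hV0 : 0 ≤ V)
    (hsum : g1^2 + g2^2 + z^2 = ℓ)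
    (he2 : g1^2*g2^2 + g1^2*z^2 + g2^2*z^2 = α)
    (hxyz : g1*g2*z = W)
    (habs : g1*g2*|z| = V^3)
    (hpm : g1*g2*z = V^3 ∨ g1*g2*z = -V^3)
    (hV2eq : V^2 = |W| ^ ((2:ℝ)/3))
    (hq : ∀ t : ℝ, t < -E → 0 < t^4 - 2*ℓ*t^2 - 8*W*t + ℓ^2 - 4*α) :
    Real.sqrt (ℓ - 2*|W| ^ ((2:ℝ)/3)
      + 2*Real.sqrt (max (α - ℓ * |W| ^ ((2:ℝ)/3)) 0)) ≤ E := by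
  have hz0 : 0 ≤ |z| := abs_nonneg z
  have hzz : z ≤ |z| := le_abs_self z
  have hμ0 : 0 ≤ g1 + g2 - z := by linarith
  have hEμ : g1 + g2 - z ≤ E := by
    by_contra h
    push_neg at h
    have hroot : (-(g1+g2-z))^4 - 2*ℓ*(-(g1+g2-z))^2 - 8*W*(-(g1+g2-z)) + ℓ^2 - 4*α = 0 := by
      rw [← hsum, ← he2, ← hxyz]; ring
    have := hq (-(g1+g2-z)) (by linarith)
    linarith
  have hVg : g2 * |z| ≤ V^2 := by
    have hgz : g2*|z| ≤ g1^2 := by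
      nlinarith [mul_le_mul_of_nonneg_left hzle hg20, mul_self_le_mul_self hg20 hg21]
    have h1 : (g2*|z|)^3 ≤ (V^2)^3 := by
      calc (g2*|z|)^3 ≤ (g2*|z|)^2 * g1^2 := by
            nlinarith [mul_le_mul_of_nonneg_left hgz (sq_nonneg (g2*|z|))]
        _ = (g1*g2*|z|)^2 := by ring
        _ = (V^3)^2 := by rw [habs]
        _ = (V^2)^3 := by ring
    exact le_of_pow_le_pow_left₀ (by norm_num) (sq_nonneg V) h1
  have hK0 : 0 ≤ g1*g2 - g1*z - g2*z + V^2 := by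
    have h1 : g1*z ≤ g1*|z| := mul_le_mul_of_nonneg_left hzz hg10
    have h2 : g2*z ≤ g2*|z| := mul_le_mul_of_nonneg_left hzz hg20
    have h3 : g1*|z| ≤ g1*g2 := mul_le_mul_of_nonneg_left hzle hg10
    linarith
  have hKsq : α - ℓ*V^2 ≤ (g1*g2 - g1*z - g2*z + V^2)^2 := by
    rcases hpm with h | h
    · have hid : (g1*g2 - g1*z - g2*z + V^2)^2 + ℓ*V^2 - α = V^2*(g1+g2-z-V)^2 := by
        rw [← hsum, ← he2]
        linear_combination (2*(z-g1-g2))*h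
      nlinarith [mul_nonneg (sq_nonneg V) (sq_nonneg (g1+g2-z-V))]
    · have hid : (g1*g2 - g1*z - g2*z + V^2)^2 + ℓ*V^2 - α = V^2*(g1+g2-z+V)^2 := by
        rw [← hsum, ← he2]
        linear_combination (2*(z-g1-g2))*h
      nlinarith [mul_nonneg (sq_nonneg V) (sq_nonneg (g1+g2-z+V))]
  have hsqK : Real.sqrt (max (α - ℓ*V^2) 0) ≤ g1*g2 - g1*z - g2*z + V^2 := by
    have h1 : max (α - ℓ*V^2) 0 ≤ (g1*g2 - g1*z - g2*z + V^2)^2 :=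
      max_le hKsq (sq_nonneg _)
    calc Real.sqrt (max (α - ℓ*V^2) 0) ≤ Real.sqrt ((g1*g2 - g1*z - g2*z + V^2)^2) :=
          Real.sqrt_le_sqrt h1
      _ = g1*g2 - g1*z - g2*z + V^2 := Real.sqrt_sq hK0
  have hμsq : ℓ - 2*V^2 + 2*Real.sqrt (max (α - ℓ*V^2) 0) ≤ (g1+g2-z)^2 := by
    have h1 : (g1+g2-z)^2 = ℓ + 2*(g1*g2 - g1*z - g2*z + V^2) - 2*V^2 := by
      rw [← hsum]; ring
    linarith
  rw [← hV2eq]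
  calc Real.sqrt (ℓ - 2*V^2 + 2*Real.sqrt (max (α - ℓ*V^2) 0))
      ≤ Real.sqrt ((g1+g2-z)^2) := Real.sqrt_le_sqrt hμsq
    _ = g1+g2-z := Real.sqrt_sq hμ0
    _ ≤ E := hEμ

private lemma sorted_alg (E ℓ α W a b c : ℝ)
    (hc0 : 0 ≤ c) (hcb : c ≤ b) (hba : b ≤ a)
    (hsum : a + b + c = ℓ)
    (he2 : a*b + a*c + b*c = α)
    (hprod : a*b*c = W^2)
    (hq : ∀ t : ℝ, t < -E → 0 < t^4 - 2*ℓ*t^2 - 8*W*t + ℓ^2 - 4*α) :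
    Real.sqrt (ℓ - 2*|W| ^ ((2:ℝ)/3)
      + 2*Real.sqrt (max (α - ℓ * |W| ^ ((2:ℝ)/3)) 0)) ≤ E := by
  have hb0 : 0 ≤ b := le_trans hc0 hcb
  have ha0 : 0 ≤ a := le_trans hb0 hba
  set g1 := Real.sqrt a with hg1def
  set g2 := Real.sqrt b with hg2def
  set g3 := Real.sqrt c with hg3def
  have hg1 : g1^2 = a := Real.sq_sqrt ha0
  have hg2 : g2^2 = b := Real.sq_sqrt hb0
  have hg3 : g3^2 = c := Real.sq_sqrt hc0
  have hg10 : 0 ≤ g1 := Real.sqrt_nonneg a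
  have hg20 : 0 ≤ g2 := Real.sqrt_nonneg b
  have hg30 : 0 ≤ g3 := Real.sqrt_nonneg c
  have hg21 : g2 ≤ g1 := Real.sqrt_le_sqrt hba
  have hg32 : g3 ≤ g2 := Real.sqrt_le_sqrt hcb
  have hV3 : (|W| ^ ((1:ℝ)/3))^3 = |W| := by
    rw [← Real.rpow_natCast (|W| ^ ((1:ℝ)/3)) 3, ← Real.rpow_mul (abs_nonneg W)]
    norm_num
  have hV2eq : (|W| ^ ((1:ℝ)/3))^2 = |W| ^ ((2:ℝ)/3) := by
    rw [← Real.rpow_natCast (|W| ^ ((1:ℝ)/3)) 2, ← Real.rpow_mul (abs_nonneg W)]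
    norm_num
  have hV0 : 0 ≤ |W| ^ ((1:ℝ)/3) := Real.rpow_nonneg (abs_nonneg W) _
  have habs3 : g1*g2*g3 = |W| := by
    rw [hg1def, hg2def, hg3def, ← Real.sqrt_mul ha0, ← Real.sqrt_mul (mul_nonneg ha0 hb0),
      hprod, Real.sqrt_sq_eq_abs]
  rcases le_or_gt 0 W with hW | hW
  · refine core_alg E ℓ α W g1 g2 g3 (|W| ^ ((1:ℝ)/3)) hg10 hg20 hg21 ?_ hV0 ?_ ?_ ?_ ?_ ?_ hV2eq hq
    · rw [abs_of_nonneg hg30]; exact hg32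
    · rw [hg1, hg2, hg3]; exact hsum
    · rw [show g1^2*g2^2 + g1^2*g3^2 + g2^2*g3^2
          = (g1^2)*(g2^2) + (g1^2)*(g3^2) + (g2^2)*(g3^2) from rfl, hg1, hg2, hg3]
      exact he2
    · rw [← abs_of_nonneg hW]; exact habs3
    · rw [hV3, abs_of_nonneg hg30]; exact habs3
    · exact Or.inl (by rw [hV3]; exact habs3)
  · refine core_alg E ℓ α W g1 g2 (-g3) (|W| ^ ((1:ℝ)/3)) hg10 hg20 hg21 ?_ hV0 ?_ ?_ ?_ ?_ ?_ hV2eq hq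
    · rw [abs_neg, abs_of_nonneg hg30]; exact hg32
    · rw [show (-g3)^2 = g3^2 from by ring, hg1, hg2, hg3]; exact hsum
    · rw [show g1^2*g2^2 + g1^2*(-g3)^2 + g2^2*(-g3)^2
          = (g1^2)*(g2^2) + (g1^2)*(g3^2) + (g2^2)*(g3^2) from by ring, hg1, hg2, hg3]
      exact he2
    · rw [show g1*g2*(-g3) = -(g1*g2*g3) from by ring, habs3, abs_of_neg hW]; ring
    · rw [abs_neg, abs_of_nonneg hg30, hV3]; exact habs3
    · refine Or.inr ?_
      rw [show g1*g2*(-g3) = -(g1*g2*g3) from by ring, habs3, hV3]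

private lemma unsorted_alg (E ℓ α W a b c : ℝ)
    (ha : 0 ≤ a) (hb : 0 ≤ b) (hc : 0 ≤ c)
    (hsum : a + b + c = ℓ)
    (he2 : a*b + a*c + b*c = α)
    (hprod : a*b*c = W^2)
    (hq : ∀ t : ℝ, t < -E → 0 < t^4 - 2*ℓ*t^2 - 8*W*t + ℓ^2 - 4*α) :
    Real.sqrt (ℓ - 2*|W| ^ ((2:ℝ)/3)
      + 2*Real.sqrt (max (α - ℓ * |W| ^ ((2:ℝ)/3)) 0)) ≤ E := by
  rcases le_total a b with h1 | h1 <;> rcases le_total b c with h2 | h2 <;>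
    rcases le_total a c with h3 | h3
  · exact sorted_alg E ℓ α W c b a ha h1 h2 (by linarith) (by linear_combination he2)
      (by linear_combination hprod) hq
  · exact sorted_alg E ℓ α W c b a ha h1 h2 (by linarith) (by linear_combination he2)
      (by linear_combination hprod) hq
  · exact sorted_alg E ℓ α W b c a ha (by linarith) h2 (by linarith)
      (by linear_combination he2) (by linear_combination hprod) hq
  · exact sorted_alg E ℓ α W b a c hc h3 h1 (by linarith) (by linear_combination he2)
      (by linear_combination hprod) hq
  · exact sorted_alg E ℓ α W c a b hb (by linarith) h3 (by linarith)
      (by linear_combination he2) (by linear_combination hprod) hq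
  · exact sorted_alg E ℓ α W a c b hb h2 (by linarith) (by linarith)
      (by linear_combination he2) (by linear_combination hprod) hq
  · exact sorted_alg E ℓ α W c a b hb (by linarith) h3 (by linarith)
      (by linear_combination he2) (by linear_combination hprod) hq
  · exact sorted_alg E ℓ α W a b c hc h2 h1 (by linarith) (by linear_combination he2)
      (by linear_combination hprod) hq

/-- **Wang–Xie–Zhang positive energy inequality for asymptotically anti-de Sitter
initial data.** Positive semidefiniteness of the `4 × 4` Hermitian energy-momentum matrix
`Q` with invariants `tr Q = 4E₀`, `Q⁽²⁾ = 6E₀² - 2L²`, `Q⁽³⁾ = 4E₀(E₀² - L²) + 8W`,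
`det Q = (E₀² - L²)² + 8E₀W - 4A⁴` yields
`E₀ ≥ √(L² - 2V² + 2 √(max{A⁴ - L²V², 0}))` where `V² = |W|^{2/3}`. -/
theorem positive_energy_aAdS
    (E₀ : ℝ) (c c' J : EuclideanSpace ℝ (Fin 3))
    (Q : Matrix (Fin 4) (Fin 4) ℂ)
    (hHerm : Q.IsHermitian)
    (hPSD : Q.PosSemidef)
    (htr : Q.trace = ((4 * E₀ : ℝ) : ℂ))
    (h2 : principalMinorSum Q 2 = ((6 * E₀ ^ 2 - 2 * Lsq c c' J : ℝ) : ℂ))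
    (h3 : principalMinorSum Q 3
      = ((4 * E₀ * (E₀ ^ 2 - Lsq c c' J) + 8 * tripleProd c c' J : ℝ) : ℂ))
    (hdet : Q.det
      = (((E₀ ^ 2 - Lsq c c' J) ^ 2 + 8 * E₀ * tripleProd c c' J - 4 * Afour c c' J : ℝ) : ℂ)) :
    E₀ ≥ Real.sqrt (Lsq c c' J - 2 * |tripleProd c c' J| ^ ((2 : ℝ) / 3)
      + 2 * Real.sqrt (max (Afour c c' J - Lsq c c' J * |tripleProd c c' J| ^ ((2 : ℝ) / 3)) 0)) := by
  have hGpsd := gram_psd c c' J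
  have hq : ∀ t : ℝ, t < -E₀ → 0 < t^4 - 2*(Lsq c c' J)*t^2 - 8*(tripleProd c c' J)*t
      + (Lsq c c' J)^2 - 4*(Afour c c' J) := by
    intro t ht
    have hRpos : (0:ℝ) < -(E₀+t) := by linarith
    have hdet1 : 0 < Matrix.det (Q + ((-(E₀+t) : ℝ) : ℂ) • (1 : Matrix (Fin 4) (Fin 4) ℂ)) :=
      det_add_posdef Q hPSD _ hRpos
    have hdet2 : Matrix.det (Q + ((-(E₀+t) : ℝ) : ℂ) • (1 : Matrix (Fin 4) (Fin 4) ℂ))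
        = (((-(E₀+t))^4 + (4*E₀)*(-(E₀+t))^3 + (6*E₀^2-2*Lsq c c' J)*(-(E₀+t))^2
          + (4*E₀*(E₀^2-Lsq c c' J)+8*tripleProd c c' J)*(-(E₀+t))
          + ((E₀^2-Lsq c c' J)^2+8*E₀*tripleProd c c' J-4*Afour c c' J) : ℝ) : ℂ) := by
      rw [det_add_smul_one, htr, h2, h3, hdet]
      push_cast
      ring
    rw [hdet2, Complex.zero_lt_real] at hdet1
    nlinarith [hdet1]
  have hG : (gram c c' J).IsHermitian := hGpsd.1
  have ha := hGpsd.eigenvalues_nonneg 0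
  have hb := hGpsd.eigenvalues_nonneg 1
  have hc := hGpsd.eigenvalues_nonneg 2
  have hsum : hG.eigenvalues 0 + hG.eigenvalues 1 + hG.eigenvalues 2 = Lsq c c' J := by
    have := trace_eq_sum_ev hG
    rw [gram_trace, Fin.sum_univ_three] at this
    linarith
  have hsumsq : (hG.eigenvalues 0)^2 + (hG.eigenvalues 1)^2 + (hG.eigenvalues 2)^2
      = (Lsq c c' J)^2 - 2 * Afour c c' J := by
    have := trace_sq_eq_sum_ev hG
    rw [gram_trace_sq, Fin.sum_univ_three] at this
    linarith
  have hprod : hG.eigenvalues 0 * hG.eigenvalues 1 * hG.eigenvalues 2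
      = (tripleProd c c' J)^2 := by
    have := hG.det_eq_prod_eigenvalues
    rw [gram_det, Fin.prod_univ_three] at this
    exact_mod_cast this.symm
  have he2 : hG.eigenvalues 0 * hG.eigenvalues 1 + hG.eigenvalues 0 * hG.eigenvalues 2
      + hG.eigenvalues 1 * hG.eigenvalues 2 = Afour c c' J := by
    have hid : (hG.eigenvalues 0 + hG.eigenvalues 1 + hG.eigenvalues 2)^2
        = (hG.eigenvalues 0)^2 + (hG.eigenvalues 1)^2 + (hG.eigenvalues 2)^2
          + 2*(hG.eigenvalues 0 * hG.eigenvalues 1 + hG.eigenvalues 0 * hG.eigenvalues 2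
            + hG.eigenvalues 1 * hG.eigenvalues 2) := by ring
    rw [hsum, hsumsq] at hid
    nlinarith [hid]
  exact unsorted_alg E₀ (Lsq c c' J) (Afour c c' J) (tripleProd c c' J)
    (hG.eigenvalues 0) (hG.eigenvalues 1) (hG.eigenvalues 2) ha hb hc hsum he2 hprod hq

end
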